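/- arXiv:2508.01914 — 2 statements merged into one kernel-verified Lean document; each statement's English description precedes it below -/
import Mathlib

section
/- Let (Ω, 𝔽, ℙ) be a probability space, H a separable complex Hilbert space, and (Ψ_k)_{k∈ℕ} an i.i.d. sequence of strongly measurable random operators on H taking values in positive contractions, satisfying the coercivity condition 𝔼‖Ψ_k x‖² ≥ C‖x‖² for all x ∈ H with a constant 0 < C < 1. With R₀ = I and R_n = (I − Ψ_n)⋯(I − Ψ₁), one has for every x ∈ H and every n ≥ 0 the geometric decay 𝔼‖R_n x‖² ≤ (1 − C)^n ‖x‖². -/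
open MeasureTheory ProbabilityTheory Filter

/-- The σ-algebra on `B(H)` generated by the point evaluations `T ↦ T x`, i.e. the σ-algebra
corresponding to measurability in the strong operator sense. -/
noncomputable def strongMS (H : Type*) [NormedAddCommGroup H] [InnerProductSpace ℂ H] :
    MeasurableSpace (H →L[ℂ] H) :=
  ⨆ x : H, (borel H).comap fun T => T x

/-- The residual products `R₀ = I`, `R_n(ω) = (I - Ψ_n(ω))⋯(I - Ψ₁(ω))`.
Random operators are indexed starting from `1`, i.e. `Ψ 1, Ψ 2, …`. -/
noncomputable def residualProd {Ω H : Type*} [NormedAddCommGroup H] [InnerProductSpace ℂ H]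
    (Ψ : ℕ → Ω → (H →L[ℂ] H)) (ω : Ω) : ℕ → (H →L[ℂ] H)
  | 0 => 1
  | n + 1 => (1 - Ψ (n + 1) ω) * residualProd Ψ ω n

/-!
Since `Ψ_{n+1}` is a positive contraction, `Ψ² ≤ Ψ`, which gives the pointwise estimate
`‖(I - Ψ_{n+1}) y‖² ≤ ‖y‖² - ‖Ψ_{n+1} y‖²`. Applied to `y = R_n x`, which is a function of
`Ψ_1, …, Ψ_n` and hence independent of `Ψ_{n+1}`, Fubini and the coercivity condition give
`𝔼‖Ψ_{n+1} R_n x‖² ≥ C 𝔼‖R_n x‖²`, so `𝔼‖R_{n+1} x‖² ≤ (1 - C) 𝔼‖R_n x‖²`.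
-/

theorem ProbabilityTheory.IndepFun.integral_comp_eq_integral_integral {Ω α β E : Type*}
    {mΩ : MeasurableSpace Ω} {mα : MeasurableSpace α} {mβ : MeasurableSpace β} {μ : Measure Ω}
    [IsFiniteMeasure μ] [NormedAddCommGroup E] [NormedSpace ℝ E]
    {X : Ω → α} {Y : Ω → β} {f : α → β → E} (hXY : IndepFun X Y μ)
    (hX : Measurable X) (hY : Measurable Y) (hf : StronglyMeasurable (Function.uncurry f))
    (hint : Integrable (fun q : Ω × Ω => f (X q.1) (Y q.2)) (μ.prod μ)) :
    ∫ ω, f (X ω) (Y ω) ∂μ = ∫ ω, ∫ ω', f (X ω') (Y ω) ∂μ ∂μ :=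
  calc ∫ ω, f (X ω) (Y ω) ∂μ = ∫ p, Function.uncurry f p ∂(μ.map fun ω => (X ω, Y ω)) :=
        (integral_map (hX.prodMk hY).aemeasurable hf.aestronglyMeasurable).symm
    _ = ∫ q, Function.uncurry f (Prod.map X Y q) ∂(μ.prod μ) := by
        rw [hXY.map_prod_eq_prod_map_map hX.aemeasurable hY.aemeasurable,
          Measure.map_prod_map _ _ hX hY,
          integral_map (hX.prodMap hY).aemeasurable hf.aestronglyMeasurable]
    _ = ∫ ω, ∫ ω', f (X ω') (Y ω) ∂μ ∂μ := integral_prod_symm _ hint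

section

variable {H : Type*} [NormedAddCommGroup H] [InnerProductSpace ℂ H]

-- `B(H)` also carries the global Borel instance; here it gets the strong-operator σ-algebra.
attribute [local instance high] strongMS

section PositiveContraction

variable [CompleteSpace H]

theorem norm_one_sub_apply_sq_add_norm_apply_sq_le {T : H →L[ℂ] H} (h0 : 0 ≤ T) (h1 : T ≤ 1)
    (y : H) : ‖(1 - T) y‖ ^ 2 + ‖T y‖ ^ 2 ≤ ‖y‖ ^ 2 := by
  have hT : T.IsPositive := (ContinuousLinearMap.nonneg_iff_isPositive T).mp h0
  have hsq : (T - T ^ 2).IsPositive :=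
    (ContinuousLinearMap.le_def _ _).mp (by simpa using CStarAlgebra.pow_antitone h0 h1 one_le_two)
  have hnorm : ‖T y‖ ^ 2 = RCLike.re (inner ℂ ((T ^ 2) y) y) := by
    rw [sq T, mul_apply_eq_comp, ← hT.isSelfAdjoint.adjoint_eq,
      ContinuousLinearMap.adjoint_inner_left, hT.isSelfAdjoint.adjoint_eq, inner_self_eq_norm_sq]
  have hle : ‖T y‖ ^ 2 ≤ RCLike.re (inner ℂ y (T y)) := by
    have := hsq.re_inner_nonneg_left y
    rw [sub_apply, inner_sub_left, map_sub] at this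
    rw [inner_re_symm]
    linarith
  rw [sub_apply, one_apply_eq_self, norm_sub_sq (𝕜 := ℂ)]
  linarith

theorem norm_residualProd_le_one {Ω : Type*} {Ψ : ℕ → Ω → (H →L[ℂ] H)} {ω : Ω}
    (h0 : ∀ k, 0 ≤ Ψ k ω) (h1 : ∀ k, Ψ k ω ≤ 1) (n : ℕ) : ‖residualProd Ψ ω n‖ ≤ 1 := by
  induction n with
  | zero => exact ContinuousLinearMap.norm_id_le
  | succ n ih =>
    have hfactor : ‖1 - Ψ (n + 1) ω‖ ≤ 1 :=
      (CStarAlgebra.norm_le_one_iff_of_nonneg _ (sub_nonneg.mpr (h1 _))).mpr (sub_le_self 1 (h0 _))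
    calc ‖residualProd Ψ ω (n + 1)‖ ≤ ‖1 - Ψ (n + 1) ω‖ * ‖residualProd Ψ ω n‖ := norm_mul_le _ _
      _ ≤ 1 := mul_le_one₀ hfactor (norm_nonneg _) ih

end PositiveContraction

section Measurability

variable [MeasurableSpace H] [BorelSpace H]

theorem measurable_strongMS_iff {α : Type*} {mα : MeasurableSpace α} {f : α → (H →L[ℂ] H)} :
    Measurable[mα] f ↔ ∀ y, Measurable fun a => f a y := by
  simp only [measurable_iff_comap_le, strongMS, MeasurableSpace.comap_iSup, iSup_le_iff,
    MeasurableSpace.comap_comp, BorelSpace.measurable_eq (α := H)]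
  rfl

variable [TopologicalSpace.SeparableSpace H]

theorem measurable_apply_strongMS :
    Measurable (fun p : (H →L[ℂ] H) × H => p.1 p.2) :=
  have : SecondCountableTopology H := UniformSpace.secondCountable_of_separable H
  (measurable_uncurry_of_continuous_of_measurable (u := fun (y : H) (T : H →L[ℂ] H) => T y)
    (fun T => T.continuous) (fun y => measurable_strongMS_iff.mp measurable_id y)).comp
    measurable_swap

theorem measurable_residualProd_apply {Ω : Type*} {m : MeasurableSpace Ω}
    {Ψ : ℕ → Ω → (H →L[ℂ] H)} {n : ℕ} (hΨ : ∀ k ≤ n, Measurable[m] (Ψ k)) (x : H) :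
    Measurable fun ω => residualProd Ψ ω n x := by
  induction n with
  | zero => exact measurable_const
  | succ n ih =>
    have hR := ih fun k hk => hΨ k (hk.trans n.le_succ)
    have hΨR : Measurable fun ω => Ψ (n + 1) ω (residualProd Ψ ω n x) :=
      measurable_apply_strongMS.comp ((hΨ (n + 1) le_rfl).prodMk hR)
    have : SecondCountableTopology H := UniformSpace.secondCountable_of_separable H
    simp only [residualProd, mul_apply_eq_comp, sub_apply, one_apply_eq_self]
    exact hR.sub hΨR

theorem ProbabilityTheory.iIndepFun.indepFun_residualProd_apply {Ω : Type*}
    {mΩ : MeasurableSpace Ω} {μ : Measure Ω} {Ψ : ℕ → Ω → (H →L[ℂ] H)} (hindep : iIndepFun Ψ μ)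
    (hΨ : ∀ k, Measurable (Ψ k)) (x : H) (n : ℕ) :
    IndepFun (Ψ (n + 1)) (fun ω => residualProd Ψ ω n x) μ := by
  have h := indep_iSup_of_disjoint (fun k => (hΨ k).comap_le) hindep.iIndep
    (S := {n + 1}) (T := Set.Iic n) (by simp)
  rw [iSup_singleton] at h
  refine (IndepFun_iff_Indep _ _ _).mpr (indep_of_indep_of_le_right h ?_)
  refine (measurable_residualProd_apply (fun k hk => ?_) x).comap_le
  exact Measurable.of_comap_le (le_iSup₂ (f := fun k (_ : k ∈ Set.Iic n) =>
    (strongMS H).comap (Ψ k)) k hk)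

end Measurability

variable [CompleteSpace H] [MeasurableSpace H] [BorelSpace H] [TopologicalSpace.SeparableSpace H]

theorem integral_norm_sq_one_sub_apply_le {Ω : Type*} {mΩ : MeasurableSpace Ω} {μ : Measure Ω}
    [IsFiniteMeasure μ] {X : Ω → (H →L[ℂ] H)} {Y : Ω → H} (hXY : IndepFun X Y μ)
    (hX : Measurable X) (hY : Measurable Y) (h0 : ∀ ω, 0 ≤ X ω) (h1 : ∀ ω, X ω ≤ 1)
    (hYint : Integrable (fun ω => ‖Y ω‖ ^ 2) μ) {C : ℝ}
    (hcoer : ∀ y, C * ‖y‖ ^ 2 ≤ ∫ ω, ‖X ω y‖ ^ 2 ∂μ) :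
    ∫ ω, ‖(1 - X ω) (Y ω)‖ ^ 2 ∂μ ≤ (1 - C) * ∫ ω, ‖Y ω‖ ^ 2 ∂μ := by
  have hsq_le : ∀ ω y, ‖X ω y‖ ^ 2 ≤ ‖y‖ ^ 2 := fun ω y => by
    gcongr
    exact (X ω).le_of_opNorm_le ((CStarAlgebra.norm_le_one_iff_of_nonneg _ (h0 ω)).mpr (h1 ω)) y
      |>.trans_eq (one_mul _)
  have hf : Measurable fun p : (H →L[ℂ] H) × H => ‖p.1 p.2‖ ^ 2 :=
    measurable_apply_strongMS.norm.pow_const 2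
  have hXYint : Integrable (fun ω => ‖X ω (Y ω)‖ ^ 2) μ :=
    hYint.mono' (hf.comp (hX.prodMk hY)).aestronglyMeasurable
      (.of_forall fun ω => by simpa using hsq_le ω (Y ω))
  have hprod_int : Integrable (fun q : Ω × Ω => ‖X q.1 (Y q.2)‖ ^ 2) (μ.prod μ) :=
    (hYint.comp_snd μ).mono'
      (hf.comp ((hX.comp measurable_fst).prodMk (hY.comp measurable_snd))).aestronglyMeasurable
      (.of_forall fun q => by simpa using hsq_le q.1 (Y q.2))
  have hlower : C * ∫ ω, ‖Y ω‖ ^ 2 ∂μ ≤ ∫ ω, ‖X ω (Y ω)‖ ^ 2 ∂μ := by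
    rw [hXY.integral_comp_eq_integral_integral (f := fun (T : H →L[ℂ] H) y => ‖T y‖ ^ 2) hX hY
      hf.stronglyMeasurable hprod_int, ← integral_const_mul]
    exact integral_mono (hYint.const_mul C) hprod_int.integral_prod_right fun ω => hcoer (Y ω)
  calc ∫ ω, ‖(1 - X ω) (Y ω)‖ ^ 2 ∂μ ≤ ∫ ω, (‖Y ω‖ ^ 2 - ‖X ω (Y ω)‖ ^ 2) ∂μ :=
        integral_mono_of_nonneg (.of_forall fun _ => by positivity) (hYint.sub hXYint)
          (.of_forall fun ω => le_sub_iff_add_le.mpr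
            (norm_one_sub_apply_sq_add_norm_apply_sq_le (h0 ω) (h1 ω) (Y ω)))
    _ = ∫ ω, ‖Y ω‖ ^ 2 ∂μ - ∫ ω, ‖X ω (Y ω)‖ ^ 2 ∂μ := integral_sub hYint hXYint
    _ ≤ (1 - C) * ∫ ω, ‖Y ω‖ ^ 2 ∂μ := by linarith

end

theorem expectation_residualProd_geometric_decay_general
    {Ω : Type*} [MeasureSpace Ω] [IsProbabilityMeasure (ℙ : Measure Ω)]
    {H : Type*} [NormedAddCommGroup H] [InnerProductSpace ℂ H]
    [CompleteSpace H] [TopologicalSpace.SeparableSpace H]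
    [MeasurableSpace H] [BorelSpace H]
    (Ψ : ℕ → Ω → (H →L[ℂ] H))
    (hmeas : ∀ k, ∀ x : H, Measurable fun ω => Ψ k ω x)
    (hpos : ∀ k ω, 0 ≤ Ψ k ω) (hcontr : ∀ k ω, Ψ k ω ≤ 1)
    (hindep : iIndepFun (m := fun _ : ℕ => strongMS H) Ψ (ℙ : Measure Ω))
    (C : ℝ) (hC1 : C < 1)
    (hcoer : ∀ k, ∀ x : H, C * ‖x‖ ^ 2 ≤ ∫ ω : Ω, ‖Ψ k ω x‖ ^ 2 ∂(ℙ : Measure Ω))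
    (x : H) (n : ℕ) :
    ∫ ω : Ω, ‖residualProd Ψ ω n x‖ ^ 2 ∂(ℙ : Measure Ω) ≤ (1 - C) ^ n * ‖x‖ ^ 2 := by
  have hΨ : ∀ k, Measurable[_, strongMS H] (Ψ k) :=
    fun k => measurable_strongMS_iff.mpr (hmeas k)
  induction n with
  | zero => simp [residualProd]
  | succ n ih =>
    have hR := measurable_residualProd_apply (n := n) (fun k _ => hΨ k) x
    have hRint : Integrable (fun ω => ‖residualProd Ψ ω n x‖ ^ 2) :=
      .of_bound (hR.norm.pow_const 2).aestronglyMeasurable (‖x‖ ^ 2) (.of_forall fun ω => by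
        have := (residualProd Ψ ω n).le_of_opNorm_le
          (norm_residualProd_le_one (hpos · ω) (hcontr · ω) n) x
        simpa using pow_le_pow_left₀ (norm_nonneg _) (this.trans_eq (one_mul _)) 2)
    calc ∫ ω, ‖residualProd Ψ ω (n + 1) x‖ ^ 2
        = ∫ ω, ‖(1 - Ψ (n + 1) ω) (residualProd Ψ ω n x)‖ ^ 2 := rfl
      _ ≤ (1 - C) * ∫ ω, ‖residualProd Ψ ω n x‖ ^ 2 :=
        integral_norm_sq_one_sub_apply_le (hindep.indepFun_residualProd_apply hΨ x n) (hΨ _) hR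
          (hpos _) (hcontr _) hRint (hcoer (n + 1))
      _ ≤ (1 - C) * ((1 - C) ^ n * ‖x‖ ^ 2) :=
        mul_le_mul_of_nonneg_left ih (sub_nonneg.mpr hC1.le)
      _ = (1 - C) ^ (n + 1) * ‖x‖ ^ 2 := by ring

/-- For an i.i.d. sequence `(Ψ_k)` of strongly measurable random positive
contractions on a separable complex Hilbert space `H` satisfying the coercivity condition
`𝔼‖Ψ_k x‖² ≥ C‖x‖²` with `0 < C < 1`, the residuals `R_n = (I - Ψ_n)⋯(I - Ψ₁)` satisfy the
geometric decay `𝔼‖R_n x‖² ≤ (1 - C)^n ‖x‖²` for every `x ∈ H` and `n ≥ 0`. -/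
theorem expectation_residualProd_geometric_decay
    {Ω : Type*} [MeasureSpace Ω] [IsProbabilityMeasure (ℙ : Measure Ω)]
    {H : Type*} [NormedAddCommGroup H] [InnerProductSpace ℂ H]
    [CompleteSpace H] [TopologicalSpace.SeparableSpace H]
    [MeasurableSpace H] [BorelSpace H]
    (Ψ : ℕ → Ω → (H →L[ℂ] H))
    (hmeas : ∀ k, ∀ x : H, Measurable fun ω => Ψ k ω x)
    (hpos : ∀ k ω, 0 ≤ Ψ k ω) (hcontr : ∀ k ω, Ψ k ω ≤ 1)
    (hindep : iIndepFun (m := fun _ : ℕ => strongMS H) Ψ (ℙ : Measure Ω))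
    (hident : ∀ i j : ℕ,
      @IdentDistrib Ω Ω (H →L[ℂ] H) _ _ (strongMS H) (Ψ i) (Ψ j) ℙ ℙ)
    (C : ℝ) (hC0 : 0 < C) (hC1 : C < 1)
    (hcoer : ∀ k, ∀ x : H, C * ‖x‖ ^ 2 ≤ ∫ ω : Ω, ‖Ψ k ω x‖ ^ 2 ∂(ℙ : Measure Ω))
    (x : H) (n : ℕ) :
    ∫ ω : Ω, ‖residualProd Ψ ω n x‖ ^ 2 ∂(ℙ : Measure Ω) ≤ (1 - C) ^ n * ‖x‖ ^ 2 :=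
  expectation_residualProd_geometric_decay_general Ψ hmeas hpos hcontr hindep C hC1 hcoer x n
end

section
/- Let H be a separable complex Hilbert space and {(W_i, v_i)}_{i∈ℕ} a fusion frame for H with lower bound A > 0, i.e. A‖x‖² ≤ Σ_i v_i² ‖P_{W_i} x‖² ≤ B‖x‖² for all x ∈ H, where P_{W_i} is the orthogonal projection onto the closed subspace W_i. Assume Σ_i v_i² = 1, and let (Ψ_k)_{k∈ℕ} be an i.i.d. sequence of random operators with ℙ(Ψ_k = P_{W_i}) = v_i² for each i. Set T_k = Ψ_k (I − Ψ_{k−1})⋯(I − Ψ₁). Then for every x ∈ H, almost surely x = lim_{n→∞} Σ_{k=1}^{n} T_k x. -/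
open MeasureTheory ProbabilityTheory Filter

/-- The orthogonal projection onto a closed subspace `W`, viewed as an operator `H → H`. -/
noncomputable def projL {H : Type*} [NormedAddCommGroup H] [InnerProductSpace ℂ H]
    (W : Submodule ℂ H) [CompleteSpace W] : H →L[ℂ] H :=
  W.subtypeL ∘L W.orthogonalProjectionOnto

/-!
Write `y_n = R_n x`; the partial sums telescope to `x - y_n`, so the claim is `y_n → 0` a.s.
Represent `Ψ_k` as `P_{W (ι k)}` for independent indices `ι k` with law `v_i²`. By
Pythagoras `‖y_{n+1}‖² + ‖P_{W (ι (n+1))} y_n‖² = ‖y_n‖²`, and since the fresh index `ι (n+1)`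
is independent of `y_n`, the expected removed mass is `Σ v_i² E‖P_{W_i} y_n‖² ≥ A E‖y_n‖²`
by the lower frame bound. Hence `E‖y_{n+1}‖² + A E‖y_n‖² ≤ E‖y_n‖²`, so `Σ_n E‖y_n‖² < ∞`,
whence `Σ_n ‖y_n‖² < ∞` and in particular `y_n → 0` almost surely.
-/

open scoped ENNReal Topology

theorem ENNReal.eq_of_le_of_tsum_le {α : Type*} {f g : α → ℝ≥0∞} (hf : ∑' a, f a ≠ ∞)
    (hle : ∀ a, f a ≤ g a) (hsum : ∑' a, g a ≤ ∑' a, f a) : f = g := by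
  by_contra hne
  obtain ⟨a, ha⟩ := Function.ne_iff.1 hne
  exact (ENNReal.tsum_lt_tsum hf hle ((hle a).lt_of_ne ha)).not_ge hsum

theorem ENNReal.tsum_ne_top_of_add_mul_le {a : ℕ → ℝ≥0∞} {c : ℝ≥0∞} (hc : c ≠ 0)
    (h0 : a 0 ≠ ∞) (h : ∀ n, a (n + 1) + c * a n ≤ a n) : ∑' n, a n ≠ ∞ := by
  have hpartial : ∀ n, c * ∑ k ∈ Finset.range n, a k + a n ≤ a 0 := by
    intro n
    induction n with
    | zero => simp
    | succ n ih =>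
      calc c * ∑ k ∈ Finset.range (n + 1), a k + a (n + 1)
          = c * ∑ k ∈ Finset.range n, a k + (a (n + 1) + c * a n) := by
            rw [Finset.sum_range_succ, mul_add]; ring
        _ ≤ a 0 := (add_le_add_right (h n) _).trans ih
  have hbound : c * ∑' n, a n ≤ a 0 := by
    rw [ENNReal.tsum_eq_iSup_nat, ENNReal.mul_iSup]
    exact iSup_le fun n => le_of_add_le_left (hpartial n)
  intro htop
  rw [htop, ENNReal.mul_top hc] at hbound
  exact h0 (top_le_iff.1 hbound)

theorem tendsto_zero_of_tendsto_enorm_sq {α E : Type*} [NormedAddCommGroup E] {l : Filter α}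
    {u : α → E} (h : Tendsto (fun a => ‖u a‖ₑ ^ 2) l (𝓝 0)) : Tendsto u l (𝓝 0) := by
  have hroot := ((ENNReal.continuous_rpow_const (y := (2 : ℕ)⁻¹)).tendsto 0).comp h
  simp only [Function.comp_def, ENNReal.pow_rpow_inv_natCast two_ne_zero] at hroot
  rw [ENNReal.zero_rpow_of_pos (by positivity)] at hroot
  exact tendsto_zero_iff_enorm_tendsto_zero.2 hroot

section Probability

variable {Ω : Type*} {mΩ : MeasurableSpace Ω} {μ : Measure Ω}

theorem iIndepFun.of_measurable_comap {ι : Type*} {β γ : ι → Type*}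
    {mβ : ∀ i, MeasurableSpace (β i)} {mγ : ∀ i, MeasurableSpace (γ i)}
    {f : ∀ i, Ω → β i} {g : ∀ i, Ω → γ i} (hf : iIndepFun f μ)
    (hg : ∀ i, Measurable[(mβ i).comap (f i)] (g i)) : iIndepFun g μ :=
  (iIndepFun_iff_iIndep _ _ _).2 <| iIndep_of_iIndep_of_le ((iIndepFun_iff_iIndep _ _ _).1 hf)
    fun i => measurable_iff_comap_le.1 (hg i)

theorem measure_preimage_singleton_eq_of_le [IsProbabilityMeasure μ] {J : Ω → ℕ}
    (hJ : Measurable J) {p : ℕ → ℝ≥0∞} (hp : ∑' i, p i = 1)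
    (hle : ∀ i, μ (J ⁻¹' {i}) ≤ p i) (i : ℕ) : μ (J ⁻¹' {i}) = p i := by
  have htotal : ∑' i, μ (J ⁻¹' {i}) = 1 := by
    rw [← tsum_univ, tsum_measure_preimage_singleton Set.countable_univ
      fun i _ => hJ (measurableSet_singleton i), Set.preimage_univ, measure_univ]
  exact congrFun (ENNReal.eq_of_le_of_tsum_le (by simp [htotal]) hle (by rw [hp, htotal])) i

theorem lintegral_comp_eq_tsum_of_indepFun {E : Type*} [MeasurableSpace E] {J : Ω → ℕ}
    {Z : Ω → E} (hJ : Measurable J) (hZ : Measurable Z) (hJZ : IndepFun J Z μ)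
    {g : ℕ → E → ℝ≥0∞} (hg : ∀ i, Measurable (g i)) :
    ∫⁻ ω, g (J ω) (Z ω) ∂μ = ∑' i, μ (J ⁻¹' {i}) * ∫⁻ ω, g i (Z ω) ∂μ := by
  have hsplit : ∀ ω, g (J ω) (Z ω) = ∑' i, (J ⁻¹' {i}).indicator 1 ω * g i (Z ω) := by
    intro ω
    rw [tsum_eq_single (J ω) fun i hi => by simp [Ne.symm hi]]
    simp
  have hfiber : ∀ i, ∫⁻ ω, (J ⁻¹' {i}).indicator 1 ω * g i (Z ω) ∂μ
      = μ (J ⁻¹' {i}) * ∫⁻ ω, g i (Z ω) ∂μ := by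
    intro i
    have hind : (J ⁻¹' {i}).indicator (1 : Ω → ℝ≥0∞) = ({i} : Set ℕ).indicator 1 ∘ J :=
      rfl
    rw [← lintegral_indicator_one (hJ (measurableSet_singleton i)), hind]
    exact lintegral_mul_eq_lintegral_mul_lintegral_of_indepFun
      ((measurable_of_countable _).comp hJ) ((hg i).comp hZ)
      (hJZ.comp (measurable_of_countable _) (hg i))
  rw [lintegral_congr hsplit, lintegral_tsum]
  · exact tsum_congr hfiber
  · exact fun i => (measurable_one.indicator (hJ (measurableSet_singleton i))).aemeasurable.mul
      ((hg i).comp hZ).aemeasurable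

theorem ae_tendsto_zero_of_tsum_lintegral_ne_top {f : ℕ → Ω → ℝ≥0∞}
    (hf : ∀ n, Measurable (f n)) (h : ∑' n, ∫⁻ ω, f n ω ∂μ ≠ ∞) :
    ∀ᵐ ω ∂μ, Tendsto (fun n => f n ω) atTop (𝓝 0) := by
  rw [← lintegral_tsum fun n => (hf n).aemeasurable] at h
  filter_upwards [ae_lt_top (Measurable.tsum hf) h] with ω hω
  exact ENNReal.tendsto_atTop_zero_of_tsum_ne_top hω.ne

end Probability

section Residual

variable {Ω H : Type*} [NormedAddCommGroup H] [InnerProductSpace ℂ H]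

theorem residualProd_succ_apply (Ψ : ℕ → Ω → (H →L[ℂ] H)) (ω : Ω) (n : ℕ) (x : H) :
    residualProd Ψ ω (n + 1) x = residualProd Ψ ω n x - Ψ (n + 1) ω (residualProd Ψ ω n x) :=
  rfl

theorem sum_Icc_apply_residualProd (Ψ : ℕ → Ω → (H →L[ℂ] H)) (ω : Ω) (n : ℕ) (x : H) :
    ∑ k ∈ Finset.Icc 1 n, Ψ k ω (residualProd Ψ ω (k - 1) x) = x - residualProd Ψ ω n x := by
  induction n with
  | zero => simp [residualProd]
  | succ n ih =>
    rw [Finset.sum_Icc_succ_top (Nat.le_add_left 1 n), ih, Nat.add_sub_cancel,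
      residualProd_succ_apply]
    abel

theorem enorm_sub_projL_sq_add_enorm_projL_sq (W : Submodule ℂ H) [CompleteSpace W] (y : H) :
    ‖y - projL W y‖ₑ ^ 2 + ‖projL W y‖ₑ ^ 2 = ‖y‖ₑ ^ 2 := by
  have h := W.norm_sq_eq_add_norm_sq_starProjection y
  rw [Submodule.starProjection_orthogonal', add_comm] at h
  simp only [← ofReal_norm, ← ENNReal.ofReal_pow (norm_nonneg _),
    ← ENNReal.ofReal_add (sq_nonneg _) (sq_nonneg _)]
  exact congrArg ENNReal.ofReal h.symm

end Residual

section StrongMeasurability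

variable {Ω H : Type*} {mΩ : MeasurableSpace Ω} [NormedAddCommGroup H] [InnerProductSpace ℂ H]
  [MeasurableSpace H] [BorelSpace H]

theorem measurable_strongMS_iff_s12 {Ψ : Ω → (H →L[ℂ] H)} :
    Measurable[mΩ, strongMS H] Ψ ↔ ∀ z, Measurable fun ω => Ψ ω z := by
  simp only [measurable_iff_comap_le, strongMS, MeasurableSpace.comap_iSup, iSup_le_iff,
    MeasurableSpace.comap_comp, ← BorelSpace.measurable_eq (α := H)]
  rfl

variable [TopologicalSpace.SeparableSpace H]

theorem measurableSet_strongMS_singleton (T : H →L[ℂ] H) : MeasurableSet[strongMS H] {T} := by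
  obtain ⟨D, hD, hDdense⟩ := TopologicalSpace.exists_countable_dense H
  have hT : ({T} : Set (H →L[ℂ] H)) = ⋂ z ∈ D, (fun S : H →L[ℂ] H => S z) ⁻¹' {T z} := by
    ext S
    simp only [Set.mem_singleton_iff, Set.mem_iInter, Set.mem_preimage]
    exact ⟨fun h z _ => h ▸ rfl, fun h => DFunLike.coe_injective
      (Continuous.ext_on hDdense S.continuous T.continuous h)⟩
  rw [hT]
  exact .biInter hD fun z _ =>
    (measurable_strongMS_iff_s12.1 (@measurable_id (H →L[ℂ] H) (strongMS H))) z
      (measurableSet_singleton _)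

/-- Taking the least admissible index makes `ι k` a function of `Ψ k`, through which the
independence of the `Ψ k` passes to the indices. -/
theorem exists_index_eq_projL {μ : Measure Ω} (W : ℕ → Submodule ℂ H) [∀ i, CompleteSpace (W i)]
    {Ψ : ℕ → Ω → (H →L[ℂ] H)} (hmeas : ∀ k x, Measurable fun ω => Ψ k ω x)
    (hvalues : ∀ k ω, ∃ i, Ψ k ω = projL (W i))
    (hindep : iIndepFun (m := fun _ : ℕ => strongMS H) Ψ μ) :
    ∃ ι : ℕ → Ω → ℕ, Ψ = (fun k ω => projL (W (ι k ω))) ∧ (∀ k, Measurable (ι k)) ∧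
      iIndepFun ι μ := by
  classical
  have hι : ∀ k, Measurable[(strongMS H).comap (Ψ k)] fun ω => Nat.find (hvalues k ω) :=
    fun k => measurable_find _ fun i =>
      ⟨{projL (W i)}, measurableSet_strongMS_singleton _, rfl⟩
  refine ⟨fun k ω => Nat.find (hvalues k ω), funext₂ fun k ω => Nat.find_spec (hvalues k ω),
    fun k => (hι k).mono (measurable_iff_comap_le.1 (measurable_strongMS_iff_s12.2 (hmeas k)))
      le_rfl, iIndepFun.of_measurable_comap hindep hι⟩

end StrongMeasurability

section IndexedResidual

variable {Ω H : Type*} [NormedAddCommGroup H] [InnerProductSpace ℂ H]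
  (W : ℕ → Submodule ℂ H) [∀ i, CompleteSpace (W i)] (ι : ℕ → Ω → ℕ)

noncomputable def indexedResidual (x : H) (n : ℕ) (ω : Ω) : H :=
  residualProd (fun k ω => projL (W (ι k ω))) ω n x

variable [MeasurableSpace H] [BorelSpace H]

theorem measurable_indexedResidual_biSup_comap (x : H) (n : ℕ) :
    Measurable[⨆ k ∈ Set.Iic n, MeasurableSpace.comap (ι k) inferInstance]
      (indexedResidual W ι x n) := by
  induction n with
  | zero => exact measurable_const
  | succ n ih =>
    have hstep : Measurable fun p : H × ℕ => p.1 - projL (W p.2) p.1 :=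
      measurable_from_prod_countable_left fun i =>
        (continuous_id.sub (projL (W i)).continuous).measurable
    refine hstep.comp (Measurable.prodMk ?_ ?_)
    · exact ih.mono (biSup_mono fun k hk => Set.Iic_subset_Iic.2 n.le_succ hk) le_rfl
    · exact Measurable.of_comap_le (le_biSup (fun k => MeasurableSpace.comap (ι k) _)
        (Set.mem_Iic.2 le_rfl))

variable {mΩ : MeasurableSpace Ω} {μ : Measure Ω}

theorem measurable_indexedResidual (hι_meas : ∀ k, Measurable (ι k)) (x : H) (n : ℕ) :
    Measurable (indexedResidual W ι x n) :=
  (measurable_indexedResidual_biSup_comap W ι x n).mono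
    (iSup₂_le fun k _ => measurable_iff_comap_le.1 (hι_meas k)) le_rfl

theorem indepFun_index_indexedResidual (hι_meas : ∀ k, Measurable (ι k)) (hι : iIndepFun ι μ)
    (x : H) (n : ℕ) : IndepFun (ι (n + 1)) (indexedResidual W ι x n) μ := by
  have h := indep_iSup_of_disjoint (fun k => measurable_iff_comap_le.1 (hι_meas k))
    ((iIndepFun_iff_iIndep _ _ _).1 hι) (S := {n + 1}) (T := Set.Iic n) (by simp)
  rw [iSup_singleton] at h
  rw [IndepFun_iff_Indep]
  exact indep_of_indep_of_le_right h
    (measurable_iff_comap_le.1 (measurable_indexedResidual_biSup_comap W ι x n))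

theorem lintegral_enorm_sq_indexedResidual_succ_add_le (hι_meas : ∀ k, Measurable (ι k))
    (hι : iIndepFun ι μ) {c : ℝ≥0∞} (x : H) (n : ℕ)
    (hframe : ∀ z, c * ‖z‖ₑ ^ 2 ≤ ∑' i, μ (ι (n + 1) ⁻¹' {i}) * ‖projL (W i) z‖ₑ ^ 2) :
    ∫⁻ ω, ‖indexedResidual W ι x (n + 1) ω‖ₑ ^ 2 ∂μ
      + c * ∫⁻ ω, ‖indexedResidual W ι x n ω‖ₑ ^ 2 ∂μ
      ≤ ∫⁻ ω, ‖indexedResidual W ι x n ω‖ₑ ^ 2 ∂μ := by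
  set y := indexedResidual W ι x
  have hy := measurable_indexedResidual W ι hι_meas x
  have hproj_meas : ∀ i, Measurable fun z => ‖projL (W i) z‖ₑ ^ 2 := fun i =>
    (projL (W i)).measurable.enorm.pow_const 2
  have hproj : ∫⁻ ω, ‖projL (W (ι (n + 1) ω)) (y n ω)‖ₑ ^ 2 ∂μ
      = ∑' i, μ (ι (n + 1) ⁻¹' {i}) * ∫⁻ ω, ‖projL (W i) (y n ω)‖ₑ ^ 2 ∂μ :=
    lintegral_comp_eq_tsum_of_indepFun (hι_meas _) (hy n)
      (indepFun_index_indexedResidual W ι hι_meas hι x n) hproj_meas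
  calc ∫⁻ ω, ‖y (n + 1) ω‖ₑ ^ 2 ∂μ + c * ∫⁻ ω, ‖y n ω‖ₑ ^ 2 ∂μ
      ≤ ∫⁻ ω, ‖y (n + 1) ω‖ₑ ^ 2 ∂μ
        + ∫⁻ ω, ∑' i, μ (ι (n + 1) ⁻¹' {i}) * ‖projL (W i) (y n ω)‖ₑ ^ 2 ∂μ := by
        rw [← lintegral_const_mul c ((hy n).enorm.pow_const 2)]
        gcongr with ω
        exact hframe _
    _ = ∫⁻ ω, ‖y (n + 1) ω‖ₑ ^ 2 ∂μ + ∫⁻ ω, ‖projL (W (ι (n + 1) ω)) (y n ω)‖ₑ ^ 2 ∂μ := by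
        rw [hproj, lintegral_tsum]
        · exact congrArg _ (tsum_congr fun i => lintegral_const_mul _ ((hproj_meas i).comp (hy n)))
        · exact fun i => (((hproj_meas i).comp (hy n)).const_mul _).aemeasurable
    _ = ∫⁻ ω, ‖y n ω‖ₑ ^ 2 ∂μ := by
        rw [← lintegral_add_left ((hy (n + 1)).enorm.pow_const 2)]
        exact lintegral_congr fun ω => enorm_sub_projL_sq_add_enorm_projL_sq _ _

theorem ae_tendsto_indexedResidual_zero [IsFiniteMeasure μ] (hι_meas : ∀ k, Measurable (ι k))
    (hι : iIndepFun ι μ) {c : ℝ≥0∞} (hc : c ≠ 0)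
    (hframe : ∀ k z, c * ‖z‖ₑ ^ 2 ≤ ∑' i, μ (ι k ⁻¹' {i}) * ‖projL (W i) z‖ₑ ^ 2) (x : H) :
    ∀ᵐ ω ∂μ, Tendsto (fun n => indexedResidual W ι x n ω) atTop (𝓝 0) := by
  have hsum : ∑' n, ∫⁻ ω, ‖indexedResidual W ι x n ω‖ₑ ^ 2 ∂μ ≠ ∞ :=
    ENNReal.tsum_ne_top_of_add_mul_le hc
      (by simp [indexedResidual, residualProd, ENNReal.mul_eq_top]) fun n =>
        lintegral_enorm_sq_indexedResidual_succ_add_le W ι hι_meas hι x n (hframe (n + 1))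
  filter_upwards [ae_tendsto_zero_of_tsum_lintegral_ne_top
    (fun n => (measurable_indexedResidual W ι hι_meas x n).enorm.pow_const 2) hsum] with ω hω
  exact tendsto_zero_of_tendsto_enorm_sq hω

end IndexedResidual

theorem fusion_frame_almost_sure_expansion_general
    {Ω : Type*} [MeasureSpace Ω] [IsProbabilityMeasure (ℙ : Measure Ω)]
    {H : Type*} [NormedAddCommGroup H] [InnerProductSpace ℂ H]
    [TopologicalSpace.SeparableSpace H]
    [MeasurableSpace H] [BorelSpace H]
    (W : ℕ → Submodule ℂ H) [∀ i, CompleteSpace (W i)]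
    (v : ℕ → ℝ)
    (A : ℝ) (hA : 0 < A)
    (hsummable : ∀ x : H, Summable fun i => v i ^ 2 * ‖projL (W i) x‖ ^ 2)
    (hlow : ∀ x : H, A * ‖x‖ ^ 2 ≤ ∑' i, v i ^ 2 * ‖projL (W i) x‖ ^ 2)
    (hprob : ∑' i, v i ^ 2 = 1)
    (Ψ : ℕ → Ω → (H →L[ℂ] H))
    (hmeas : ∀ k, ∀ x : H, Measurable fun ω => Ψ k ω x)
    (hvalues : ∀ k ω, ∃ i, Ψ k ω = projL (W i))
    (hdist : ∀ k i, (ℙ : Measure Ω) {ω | Ψ k ω = projL (W i)} = ENNReal.ofReal (v i ^ 2))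
    (hindep : iIndepFun (m := fun _ : ℕ => strongMS H) Ψ (ℙ : Measure Ω))
    (x : H) :
    ∀ᵐ ω ∂(ℙ : Measure Ω),
      Tendsto (fun n => ∑ k ∈ Finset.Icc 1 n, Ψ k ω (residualProd Ψ ω (k - 1) x))
        atTop (nhds x) := by
  obtain ⟨ι, rfl, hι_meas, hι⟩ := exists_index_eq_projL W hmeas hvalues hindep
  have hweights : ∑' i, ENNReal.ofReal (v i ^ 2) = 1 := by
    have hv : Summable fun i => v i ^ 2 := by
      by_contra h
      simp [tsum_eq_zero_of_not_summable h] at hprob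
    rw [← ENNReal.ofReal_tsum_of_nonneg (fun i => sq_nonneg _) hv, hprob, ENNReal.ofReal_one]
  have hlaw : ∀ k i, ℙ (ι k ⁻¹' {i}) = ENNReal.ofReal (v i ^ 2) := fun k =>
    measure_preimage_singleton_eq_of_le (hι_meas k) hweights fun i =>
      hdist k i ▸ measure_mono fun ω (hω : ι k ω = i) => by simp [hω]
  have hframe : ∀ k z, ENNReal.ofReal A * ‖z‖ₑ ^ 2
      ≤ ∑' i, ℙ (ι k ⁻¹' {i}) * ‖projL (W i) z‖ₑ ^ 2 := fun k z => by
    simp only [hlaw, ← ofReal_norm, ← ENNReal.ofReal_pow (norm_nonneg _),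
      ← ENNReal.ofReal_mul hA.le, ← ENNReal.ofReal_mul (sq_nonneg _),
      ← ENNReal.ofReal_tsum_of_nonneg (fun i => by positivity) (hsummable z)]
    exact ENNReal.ofReal_le_ofReal (hlow z)
  filter_upwards [ae_tendsto_indexedResidual_zero W ι hι_meas hι (by simpa using hA) hframe x]
    with ω hω
  have hlim : Tendsto (fun n => x - indexedResidual W ι x n ω) atTop (𝓝 (x - 0)) :=
    tendsto_const_nhds.sub hω
  rw [sub_zero] at hlim
  exact hlim.congr fun n => (sum_Icc_apply_residualProd _ ω n x).symm

/-- Let `{(W_i, v_i)}` be a fusion frame for `H` with `Σ_i v_i² = 1`, and let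
`(Ψ_k)` be an i.i.d. sequence of random operators with `ℙ(Ψ_k = P_{W_i}) = v_i²`. With
`T_k = Ψ_k (I - Ψ_{k-1})⋯(I - Ψ₁)`, for every `x ∈ H`, almost surely
`x = lim_n Σ_{k=1}^n T_k x`. -/
theorem fusion_frame_almost_sure_expansion
    {Ω : Type*} [MeasureSpace Ω] [IsProbabilityMeasure (ℙ : Measure Ω)]
    {H : Type*} [NormedAddCommGroup H] [InnerProductSpace ℂ H]
    [CompleteSpace H] [TopologicalSpace.SeparableSpace H]
    [MeasurableSpace H] [BorelSpace H]
    (W : ℕ → Submodule ℂ H) [∀ i, CompleteSpace (W i)]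
    (v : ℕ → ℝ) (hv : ∀ i, 0 < v i)
    (A B : ℝ) (hA : 0 < A) (hB : 0 < B)
    (hsummable : ∀ x : H, Summable fun i => v i ^ 2 * ‖projL (W i) x‖ ^ 2)
    (hlow : ∀ x : H, A * ‖x‖ ^ 2 ≤ ∑' i, v i ^ 2 * ‖projL (W i) x‖ ^ 2)
    (hup : ∀ x : H, ∑' i, v i ^ 2 * ‖projL (W i) x‖ ^ 2 ≤ B * ‖x‖ ^ 2)
    (hprob : ∑' i, v i ^ 2 = 1)
    (Ψ : ℕ → Ω → (H →L[ℂ] H))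
    (hmeas : ∀ k, ∀ x : H, Measurable fun ω => Ψ k ω x)
    (hvalues : ∀ k ω, ∃ i, Ψ k ω = projL (W i))
    (hdist : ∀ k i, (ℙ : Measure Ω) {ω | Ψ k ω = projL (W i)} = ENNReal.ofReal (v i ^ 2))
    (hindep : iIndepFun (m := fun _ : ℕ => strongMS H) Ψ (ℙ : Measure Ω))
    (hident : ∀ i j : ℕ,
      @IdentDistrib Ω Ω (H →L[ℂ] H) _ _ (strongMS H) (Ψ i) (Ψ j) ℙ ℙ)
    (x : H) :
    ∀ᵐ ω ∂(ℙ : Measure Ω),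
      Tendsto (fun n => ∑ k ∈ Finset.Icc 1 n, Ψ k ω (residualProd Ψ ω (k - 1) x))
        atTop (nhds x) :=
  fusion_frame_almost_sure_expansion_general W v A hA hsummable hlow hprob Ψ hmeas hvalues hdist
    hindep x
end
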